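/- arXiv:1205.6757 — 3 statements merged into one kernel-verified Lean document; each statement's English description precedes it below -/
import Mathlib

section
/- Let X be a finite set of distinct points in ℙ¹×ℙ¹ over k. Then X satisfies property (*) if and only if for every point P ∈ X the set deg_X(P) consists of exactly one element. -/
/-- `ℙ¹` over `k`, as the projectivization of `k²`. -/
abbrev Proj1 (k : Type*) [Field k] := Projectivization k (Fin 2 → k)

/-- The bigraded coordinate ring `R = k[x₀,x₁,y₀,y₁]` of `ℙ¹ × ℙ¹`,
with the `x` variables indexed by `Sum.inl` and the `y` variables by `Sum.inr`. -/
abbrev BiPoly (k : Type*) [Field k] := MvPolynomial (Fin 2 ⊕ Fin 2) k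

variable {k : Type*} [Field k]

/-- `F` is bihomogeneous of bidegree `d = (d₁, d₂)`: every monomial of `F` has total degree
`d₁` in `x₀,x₁` and total degree `d₂` in `y₀,y₁`. -/
def IsBihomogeneous (F : BiPoly k) (d : ℕ × ℕ) : Prop :=
  ∀ m ∈ F.support,
    (∑ i : Fin 2, m (Sum.inl i)) = d.1 ∧ (∑ i : Fin 2, m (Sum.inr i)) = d.2

/-- `F` vanishes at the point `P` of `ℙ¹ × ℙ¹`, i.e. at every pair of representatives. -/
def VanishesAt (F : BiPoly k) (P : Proj1 k × Proj1 k) : Prop :=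
  ∀ (p q : Fin 2 → k) (hp : p ≠ 0) (hq : q ≠ 0),
    Projectivization.mk k p hp = P.1 → Projectivization.mk k q hq = P.2 →
    MvPolynomial.eval (Sum.elim p q) F = 0

/-- `F` is a separator of `P` in `X` of bidegree `d`: it is bihomogeneous of bidegree `d`,
does not vanish at `P`, and vanishes at every other point of `X`. -/
def IsSeparator (X : Finset (Proj1 k × Proj1 k)) (P : Proj1 k × Proj1 k)
    (F : BiPoly k) (d : ℕ × ℕ) : Prop :=
  IsBihomogeneous F d ∧ ¬ VanishesAt F P ∧ ∀ Q ∈ X, Q ≠ P → VanishesAt F Q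

/-- The set of bidegrees of separators of `P` in `X`. -/
def sepDegrees (X : Finset (Proj1 k × Proj1 k)) (P : Proj1 k × Proj1 k) : Set (ℕ × ℕ) :=
  {d | ∃ F : BiPoly k, IsSeparator X P F d}

/-- `deg_X(P)`: the set of minimal elements, with respect to the componentwise partial
order on `ℕ × ℕ`, of the set of bidegrees of separators of `P` in `X`. -/
def degSet (X : Finset (Proj1 k × Proj1 k)) (P : Proj1 k × Proj1 k) : Set (ℕ × ℕ) :=
  {d | d ∈ sepDegrees X P ∧ ∀ e ∈ sepDegrees X P, e ≤ d → e = d}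

/-- The ideal `I_X` of all polynomials vanishing at (every representative of)
every point of `X`. -/
noncomputable def vanishingIdeal (X : Finset (Proj1 k × Proj1 k)) : Ideal (BiPoly k) where
  carrier := {F | ∀ P ∈ X, VanishesAt F P}
  zero_mem' := by
    intro P _ p q hp hq _ _
    simp
  add_mem' := by
    intro F G hF hG P hP p q hp hq h1 h2
    have h := hF P hP p q hp hq h1 h2
    have h' := hG P hP p q hp hq h1 h2
    simp [h, h']
  smul_mem' := by
    intro c F hF P hP p q hp hq h1 h2
    have h := hF P hP p q hp hq h1 h2
    simp [smul_eq_mul, h]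

/-- Property (*): whenever `P×Q, P'×Q' ∈ X` with `P ≠ P'` and `Q ≠ Q'`, at least one of
`P×Q'` and `P'×Q` is in `X`. -/
def PropertyStar (X : Finset (Proj1 k × Proj1 k)) : Prop :=
  ∀ P Q P' Q' : Proj1 k, (P, Q) ∈ X → (P', Q') ∈ X → P ≠ P' → Q ≠ Q' →
    (P, Q') ∈ X ∨ (P', Q) ∈ X

/-- The depth of a commutative ring `A` with respect to an ideal `m`: the supremum of the
lengths of regular sequences on `A` consisting of elements of `m`. -/
noncomputable def depthWrt (A : Type*) [CommRing A] (m : Ideal A) : ℕ :=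
  sSup {n | ∃ rs : List A, rs.length = n ∧ (∀ r ∈ rs, r ∈ m) ∧
    RingTheory.Sequence.IsRegular A rs}

/-- The irrelevant maximal ideal `(x₀,x₁,y₀,y₁)` of `R/I_X`. -/
noncomputable def irrelevantIdeal (X : Finset (Proj1 k × Proj1 k)) :
    Ideal (BiPoly k ⧸ vanishingIdeal X) :=
  (Ideal.span (Set.range (MvPolynomial.X : (Fin 2 ⊕ Fin 2) → BiPoly k))).map
    (Ideal.Quotient.mk (vanishingIdeal X))

/-- `X` is arithmetically Cohen–Macaulay: `depth (R/I_X) = 2`. -/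
def IsACM (X : Finset (Proj1 k × Proj1 k)) : Prop :=
  depthWrt (BiPoly k ⧸ vanishingIdeal X) (irrelevantIdeal X) = 2

open Classical in
/-- The number of points of `X` with first coordinate `P` (the cardinality of `X_{P,1}`). -/
noncomputable def fiber1Card (X : Finset (Proj1 k × Proj1 k)) (P : Proj1 k) : ℕ :=
  (X.filter fun T => T.1 = P).card

open Classical in
/-- The number of points of `X` with second coordinate `Q` (the cardinality of `X_{Q,2}`). -/
noncomputable def fiber2Card (X : Finset (Proj1 k × Proj1 k)) (Q : Proj1 k) : ℕ :=
  (X.filter fun T => T.2 = Q).card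

open Classical in
/-- The number of distinct first coordinates of points of `X`, i.e. `|π₁(X)|`. -/
noncomputable def proj1Card (X : Finset (Proj1 k × Proj1 k)) : ℕ :=
  (X.image Prod.fst).card

open Classical in
/-- The number of distinct second coordinates of points of `X`, i.e. `|π₂(X)|`. -/
noncomputable def proj2Card (X : Finset (Proj1 k × Proj1 k)) : ℕ :=
  (X.image Prod.snd).card

/-!
Fix `P = A × B ∈ X`. On the line `ℙ¹ × {B}` a separator of bidegree `d` restricts to a binary
form of degree `d.1` that is nonzero at `A` and vanishes at the other points of `X` on that line,
so `d.1 ≥ fiber2Card X B - 1`; likewise `d.2 ≥ fiber1Card X A - 1` on `{A} × ℙ¹`. Products of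
linear forms give separators attaining each of these bounds separately, so `deg_X(P)` is a
singleton exactly when the bound itself is a separator bidegree. Under (*), the product of the
linear forms through the other points of `X` on the two lines through `P` is such a separator.
Conversely, if `A × B, A' × B' ∈ X` but `A × B', A' × B ∉ X`, a separator of minimal bidegree at
`A × B` forces fewer points of `X` on `ℙ¹ × {B'}` than on `ℙ¹ × {B}`, and symmetrically.
-/

open MvPolynomial Projectivization
open scoped Classical

lemma Proj1.eq_iff_det_rep_eq_zero (A B : Proj1 k) :
    B = A ↔ A.rep 1 * B.rep 0 - A.rep 0 * B.rep 1 = 0 := by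
  conv_lhs => rw [← mk_rep A, ← mk_rep B, mk_eq_mk_iff']
  constructor
  · rintro ⟨a, ha⟩
    rw [← ha]
    simp only [Pi.smul_apply, smul_eq_mul]
    ring
  · intro h
    by_cases h0 : A.rep 0 = 0
    · have h1 : A.rep 1 ≠ 0 := fun h1 => A.rep_nonzero (by ext i; fin_cases i <;> simp [h0, h1])
      refine ⟨B.rep 1 / A.rep 1, funext (Fin.forall_fin_two.mpr ⟨?_, ?_⟩)⟩
      · simp_all
      · simp [h1]
    · refine ⟨B.rep 0 / A.rep 0, funext (Fin.forall_fin_two.mpr ⟨?_, ?_⟩)⟩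
      · simp [h0]
      · simp only [Pi.smul_apply, smul_eq_mul]
        field_simp
        linear_combination h

lemma MvPolynomial.IsHomogeneous.add_eq_of_mem_support {R : Type*} [CommSemiring R]
    {q : MvPolynomial (Fin 2) R} {n : ℕ} (hq : q.IsHomogeneous n) {m : Fin 2 →₀ ℕ}
    (hm : m ∈ q.support) : m 0 + m 1 = n := by
  simp [hq.degree_eq_sum_deg_support hm, ← Finsupp.degree_apply, Finsupp.degree_eq_sum]

lemma MvPolynomial.IsHomogeneous.natDegree_aeval_X_one_le {R : Type*} [CommSemiring R]
    {q : MvPolynomial (Fin 2) R} {n : ℕ} (hq : q.IsHomogeneous n) :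
    (MvPolynomial.aeval (![Polynomial.X, 1] : Fin 2 → Polynomial R) q).natDegree ≤ n := by
  rw [aeval_eq_eval₂Hom, coe_eval₂Hom, eval₂_eq']
  refine Polynomial.natDegree_sum_le_of_forall_le _ _ fun m hm => ?_
  simp only [Fin.prod_univ_two, Matrix.cons_val_zero, Matrix.cons_val_one, one_pow, mul_one]
  have := hq.add_eq_of_mem_support hm
  exact (Polynomial.natDegree_C_mul_X_pow_le _ _).trans (by omega)

lemma Polynomial.eval_homogenize_of_eq_zero {R : Type*} [CommSemiring R] (p : Polynomial R)
    (n : ℕ) {x : Fin 2 → R} (hx : x 1 = 0) :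
    MvPolynomial.eval x (p.homogenize n) = x 0 ^ n * p.coeff n := by
  simp only [homogenize, map_sum, MvPolynomial.eval_monomial]
  rw [Finset.sum_eq_single (n, 0)]
  · simp [mul_comm]
  · rintro ⟨i, j⟩ hij hne
    rw [Finset.HasAntidiagonal.mem_antidiagonal] at hij
    have hj : j ≠ 0 := by rintro rfl; exact hne (by simp_all)
    simp [hx, hj]
  · simp

/-- The zeros `(t : 1)` are roots of `p = q(t, 1)`, of degree at most `n`, and `(1 : 0)` can be a
zero only if that degree is less than `n`. -/
lemma MvPolynomial.IsHomogeneous.card_le_of_eval_rep_eq_zero {q : MvPolynomial (Fin 2) k} {n : ℕ}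
    (hq : q.IsHomogeneous n) (hq0 : q ≠ 0) {S : Finset (Proj1 k)}
    (hS : ∀ B ∈ S, eval B.rep q = 0) : S.card ≤ n := by
  set p := MvPolynomial.aeval (![Polynomial.X, 1] : Fin 2 → Polynomial k) q
  have hdeg : p.natDegree ≤ n := hq.natDegree_aeval_X_one_le
  have hpq : p.homogenize n = q := Polynomial.homogenize_eq_of_isHomogeneous hq rfl
  have hp0 : p ≠ 0 := by
    intro h
    rw [h, Polynomial.homogenize_zero] at hpq
    exact hq0 hpq.symm
  have haff : (S.filter fun B => B.rep 1 ≠ 0).card ≤ p.natDegree := by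
    have hinj : Set.InjOn (fun B : Proj1 k => B.rep 0 / B.rep 1)
        (S.filter fun B => B.rep 1 ≠ 0) := by
      intro B hB B' hB' h
      simp only [Finset.coe_filter, Set.mem_ofPred_eq] at hB hB' h
      rw [Proj1.eq_iff_det_rep_eq_zero]
      field_simp [hB.2, hB'.2] at h
      linear_combination h
    rw [← Finset.card_image_of_injOn hinj]
    refine Polynomial.card_le_degree_of_subset_roots fun t ht => ?_
    obtain ⟨B, hB, rfl⟩ := Finset.mem_image.mp (Finset.mem_val.mp ht)
    obtain ⟨hBS, hB1⟩ := Finset.mem_filter.mp hB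
    have := hS B hBS
    rw [← hpq, Polynomial.eval_homogenize hdeg _ hB1] at this
    exact (Polynomial.mem_roots hp0).mpr ((mul_eq_zero.mp this).resolve_right (pow_ne_zero _ hB1))
  have hinf : (S.filter fun B => B.rep 1 = 0).card ≤ n - p.natDegree := by
    rcases hdeg.lt_or_eq with hlt | heq
    · have : (S.filter fun B => B.rep 1 = 0).card ≤ 1 := by
        refine Finset.card_le_one.mpr fun B hB B' hB' => ?_
        rw [Proj1.eq_iff_det_rep_eq_zero, (Finset.mem_filter.mp hB).2, (Finset.mem_filter.mp hB').2]
        ring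
      omega
    · rw [heq, Nat.sub_self, Nat.le_zero, Finset.card_eq_zero, Finset.filter_eq_empty_iff]
      intro B hB hB1
      have hB0 : B.rep 0 ≠ 0 := fun hB0 =>
        B.rep_nonzero (by ext i; fin_cases i <;> simp [hB0, hB1])
      have := hS B hB
      rw [← hpq, Polynomial.eval_homogenize_of_eq_zero _ _ hB1, ← heq] at this
      exact mul_ne_zero (pow_ne_zero _ hB0) (Polynomial.leadingCoeff_ne_zero.mpr hp0) this
  calc S.card = _ + _ := (Finset.card_filter_add_card_filter_not (fun B => B.rep 1 = 0)).symm
    _ ≤ (n - p.natDegree) + p.natDegree := add_le_add hinf haff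
    _ = n := Nat.sub_add_cancel hdeg

lemma MvPolynomial.IsWeightedHomogeneous.isHomogeneous_bind₁ {R σ τ M : Type*} [CommSemiring R]
    [AddCommMonoid M] {w : σ → M} {F : MvPolynomial σ R} {d : M}
    (hF : IsWeightedHomogeneous w F d) (f : M →+ ℕ) {g : σ → MvPolynomial τ R}
    (hg : ∀ i, (g i).IsHomogeneous (f (w i))) : (bind₁ g F).IsHomogeneous (f d) := by
  rw [F.as_sum, map_sum]
  refine IsHomogeneous.sum _ _ _ fun m hm => ?_
  have hdeg : f d = ∑ i ∈ m.support, f (w i) * m i := by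
    rw [← hF (mem_support_iff.mp hm), Finsupp.weight_apply, map_finsuppSum, Finsupp.sum]
    simp [mul_comm]
  rw [bind₁_monomial, hdeg, ← zero_add (∑ i ∈ m.support, _)]
  exact (isHomogeneous_C _ _).mul (IsHomogeneous.prod _ _ _ fun i _ => (hg i).pow (m i))

lemma IsBihomogeneous.eval_smul {F : BiPoly k} {d : ℕ × ℕ} (hF : IsBihomogeneous F d)
    (p q : Fin 2 → k) (c e : k) :
    eval (Sum.elim (c • p) (e • q)) F = c ^ d.1 * e ^ d.2 * eval (Sum.elim p q) F := by
  rw [eval_eq', eval_eq', Finset.mul_sum]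
  refine Finset.sum_congr rfl fun m hm => ?_
  obtain ⟨h1, h2⟩ := hF m hm
  simp only [Fintype.prod_sum_type, Sum.elim_inl, Sum.elim_inr, Pi.smul_apply, smul_eq_mul,
    mul_pow, Finset.prod_mul_distrib, Finset.prod_pow_eq_pow_sum, h1, h2]
  ring

lemma IsBihomogeneous.vanishesAt_iff {F : BiPoly k} {d : ℕ × ℕ} (hF : IsBihomogeneous F d)
    (P : Proj1 k × Proj1 k) : VanishesAt F P ↔ eval (Sum.elim P.1.rep P.2.rep) F = 0 := by
  refine ⟨fun h => h _ _ _ _ (mk_rep _) (mk_rep _), fun h p q hp hq h1 h2 => ?_⟩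
  obtain ⟨c, rfl⟩ := (mk_eq_mk_iff' k _ _ hp P.1.rep_nonzero).mp (by rw [h1, mk_rep])
  obtain ⟨e, rfl⟩ := (mk_eq_mk_iff' k _ _ hq P.2.rep_nonzero).mp (by rw [h2, mk_rep])
  rw [hF.eval_smul, h, mul_zero]

def biWeight : Fin 2 ⊕ Fin 2 → ℕ × ℕ := Sum.elim (fun _ => (1, 0)) (fun _ => (0, 1))

lemma isBihomogeneous_iff_isWeightedHomogeneous {F : BiPoly k} {d : ℕ × ℕ} :
    IsBihomogeneous F d ↔ IsWeightedHomogeneous biWeight F d := by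
  have hweight : ∀ m : Fin 2 ⊕ Fin 2 →₀ ℕ, Finsupp.weight biWeight m =
      (∑ i : Fin 2, m (Sum.inl i), ∑ i : Fin 2, m (Sum.inr i)) := fun m => by
    rw [Finsupp.weight_apply, Finsupp.sum_fintype _ _ (by simp), Fintype.sum_sum_type]
    ext <;> simp [biWeight]
  refine ⟨fun h m hm => ?_, fun h m hm => ?_⟩
  · obtain ⟨h1, h2⟩ := h m (mem_support_iff.mpr hm)
    rw [hweight, h1, h2]
  · have := h (mem_support_iff.mp hm)
    rw [hweight] at this
    exact Prod.ext_iff.mp this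

lemma eval_bind₁_sumElim_C_X (F : BiPoly k) (a b : Fin 2 → k) :
    eval b (bind₁ (Sum.elim (C ∘ a) X) F) = eval (Sum.elim a b) F := by
  rw [show eval b (bind₁ _ F) = eval _ F from eval₂Hom_bind₁ _ _ _ _]
  congr 2
  funext i
  rcases i with i | i <;> simp

lemma eval_bind₁_sumElim_X_C (F : BiPoly k) (a b : Fin 2 → k) :
    eval a (bind₁ (Sum.elim X (C ∘ b)) F) = eval (Sum.elim a b) F := by
  rw [show eval a (bind₁ _ F) = eval _ F from eval₂Hom_bind₁ _ _ _ _]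
  congr 2
  funext i
  rcases i with i | i <;> simp

lemma IsBihomogeneous.card_le_snd {F : BiPoly k} {d : ℕ × ℕ} (hF : IsBihomogeneous F d)
    {A B₀ : Proj1 k} (h₀ : ¬ VanishesAt F (A, B₀)) {S : Finset (Proj1 k)}
    (hS : ∀ B ∈ S, VanishesAt F (A, B)) : S.card ≤ d.2 := by
  have hq : (bind₁ (Sum.elim (C ∘ A.rep) X) F).IsHomogeneous d.2 :=
    (isBihomogeneous_iff_isWeightedHomogeneous.mp hF).isHomogeneous_bind₁
      (AddMonoidHom.snd ℕ ℕ) (Sum.rec (fun _ => isHomogeneous_C _ _) fun _ =>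
        isHomogeneous_X _ _)
  refine hq.card_le_of_eval_rep_eq_zero (fun h => h₀ ?_) fun B hB => ?_
  · rw [hF.vanishesAt_iff, ← eval_bind₁_sumElim_C_X, h, map_zero]
  · rw [eval_bind₁_sumElim_C_X, ← hF.vanishesAt_iff (A, B)]
    exact hS B hB

lemma IsBihomogeneous.card_le_fst {F : BiPoly k} {d : ℕ × ℕ} (hF : IsBihomogeneous F d)
    {A₀ B : Proj1 k} (h₀ : ¬ VanishesAt F (A₀, B)) {S : Finset (Proj1 k)}
    (hS : ∀ A ∈ S, VanishesAt F (A, B)) : S.card ≤ d.1 := by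
  have hq : (bind₁ (Sum.elim X (C ∘ B.rep)) F).IsHomogeneous d.1 :=
    (isBihomogeneous_iff_isWeightedHomogeneous.mp hF).isHomogeneous_bind₁
      (AddMonoidHom.fst ℕ ℕ) (Sum.rec (fun _ => isHomogeneous_X _ _) fun _ =>
        isHomogeneous_C _ _)
  refine hq.card_le_of_eval_rep_eq_zero (fun h => h₀ ?_) fun A hA => ?_
  · rw [hF.vanishesAt_iff, ← eval_bind₁_sumElim_X_C, h, map_zero]
  · rw [eval_bind₁_sumElim_X_C, ← hF.vanishesAt_iff (A, B)]
    exact hS A hA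

noncomputable def fstLineForm (A : Proj1 k) : BiPoly k :=
  C (A.rep 1) * X (Sum.inl 0) - C (A.rep 0) * X (Sum.inl 1)

noncomputable def sndLineForm (B : Proj1 k) : BiPoly k :=
  C (B.rep 1) * X (Sum.inr 0) - C (B.rep 0) * X (Sum.inr 1)

noncomputable def lineProduct (U V : Finset (Proj1 k)) : BiPoly k :=
  (∏ A ∈ U, fstLineForm A) * ∏ B ∈ V, sndLineForm B

lemma isBihomogeneous_lineProduct (U V : Finset (Proj1 k)) :
    IsBihomogeneous (lineProduct U V) (U.card, V.card) := by
  rw [isBihomogeneous_iff_isWeightedHomogeneous]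
  have hfst (A : Proj1 k) : IsWeightedHomogeneous biWeight (fstLineForm A) (1, 0) :=
    ((isWeightedHomogeneous_X k biWeight _).C_mul _).sub
      ((isWeightedHomogeneous_X k biWeight _).C_mul _)
  have hsnd (B : Proj1 k) : IsWeightedHomogeneous biWeight (sndLineForm B) (0, 1) :=
    ((isWeightedHomogeneous_X k biWeight _).C_mul _).sub
      ((isWeightedHomogeneous_X k biWeight _).C_mul _)
  simpa [lineProduct] using (IsWeightedHomogeneous.prod U _ _ fun A _ => hfst A).mul
    (IsWeightedHomogeneous.prod V _ _ fun B _ => hsnd B)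

lemma eval_fstLineForm_eq_zero_iff (A A' : Proj1 k) (q : Fin 2 → k) :
    eval (Sum.elim A'.rep q) (fstLineForm A) = 0 ↔ A' = A := by
  simp [fstLineForm, Proj1.eq_iff_det_rep_eq_zero]

lemma eval_sndLineForm_eq_zero_iff (B B' : Proj1 k) (p : Fin 2 → k) :
    eval (Sum.elim p B'.rep) (sndLineForm B) = 0 ↔ B' = B := by
  simp [sndLineForm, Proj1.eq_iff_det_rep_eq_zero]

lemma vanishesAt_lineProduct_iff {U V : Finset (Proj1 k)} (P : Proj1 k × Proj1 k) :
    VanishesAt (lineProduct U V) P ↔ P.1 ∈ U ∨ P.2 ∈ V := by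
  rw [(isBihomogeneous_lineProduct U V).vanishesAt_iff, lineProduct, map_mul, mul_eq_zero,
    map_prod, map_prod, Finset.prod_eq_zero_iff, Finset.prod_eq_zero_iff]
  simp [eval_fstLineForm_eq_zero_iff, eval_sndLineForm_eq_zero_iff]

lemma isSeparator_lineProduct {X : Finset (Proj1 k × Proj1 k)} {P : Proj1 k × Proj1 k}
    {U V : Finset (Proj1 k)} (hU : P.1 ∉ U) (hV : P.2 ∉ V)
    (hX : ∀ Q ∈ X, Q ≠ P → Q.1 ∈ U ∨ Q.2 ∈ V) :
    IsSeparator X P (lineProduct U V) (U.card, V.card) :=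
  ⟨isBihomogeneous_lineProduct U V, by simp [vanishesAt_lineProduct_iff, hU, hV],
    fun Q hQ hne => (vanishesAt_lineProduct_iff Q).mpr (hX Q hQ hne)⟩

lemma exists_setOf_minimal_eq_singleton_iff {α β : Type*} [PartialOrder α] [PartialOrder β]
    [WellFoundedLT (α × β)] {S : Set (α × β)} {m : α × β} (hm : ∀ s ∈ S, m ≤ s)
    (h₁ : ∃ b, (m.1, b) ∈ S) (h₂ : ∃ a, (a, m.2) ∈ S) :
    (∃ d, {d | d ∈ S ∧ ∀ e ∈ S, e ≤ d → e = d} = {d}) ↔ m ∈ S := by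
  constructor
  · rintro ⟨d, hd⟩
    have hdS : d ∈ S := ((Set.ext_iff.mp hd d).mpr rfl).1
    have hle : ∀ s ∈ S, d ≤ s := fun s hs => by
      obtain ⟨b, hbs, hb⟩ := exists_minimal_le_of_wellFoundedLT (· ∈ S) s hs
      have : b ∈ {d | d ∈ S ∧ ∀ e ∈ S, e ≤ d → e = d} :=
        ⟨hb.prop, fun e he heb => le_antisymm heb (hb.le_of_le he heb)⟩
      rw [hd, Set.mem_singleton_iff] at this
      exact this ▸ hbs
    obtain ⟨⟨b, hb⟩, ⟨a, ha⟩⟩ := And.intro h₁ h₂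
    have hdm : d ≤ m := Prod.le_def.mpr ⟨(hle _ hb).1, (hle _ ha).2⟩
    rwa [← le_antisymm hdm (hm d hdS)]
  · intro hmS
    refine ⟨m, Set.eq_singleton_iff_unique_mem.mpr ⟨⟨hmS, fun e he hem => ?_⟩, ?_⟩⟩
    · exact le_antisymm hem (hm e he)
    · rintro d ⟨hdS, hdmin⟩
      exact (hdmin m hmS (hm d hdS)).symm

section SeparatorDegrees

noncomputable def fstOver (X : Finset (Proj1 k × Proj1 k)) (B : Proj1 k) : Finset (Proj1 k) :=
  (X.filter fun T => T.2 = B).image Prod.fst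

noncomputable def sndOver (X : Finset (Proj1 k × Proj1 k)) (A : Proj1 k) : Finset (Proj1 k) :=
  (X.filter fun T => T.1 = A).image Prod.snd

variable {X : Finset (Proj1 k × Proj1 k)} {A B : Proj1 k}

lemma mem_fstOver : A ∈ fstOver X B ↔ (A, B) ∈ X := by
  simp [fstOver]

lemma mem_sndOver : B ∈ sndOver X A ↔ (A, B) ∈ X := by
  simp [sndOver]

lemma card_fstOver : (fstOver X B).card = fiber2Card X B := by
  refine Finset.card_image_of_injOn fun T hT T' hT' h => Prod.ext h ?_
  simp only [Finset.coe_filter, Set.mem_ofPred_eq] at hT hT'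
  rw [hT.2, hT'.2]

lemma card_sndOver : (sndOver X A).card = fiber1Card X A := by
  refine Finset.card_image_of_injOn fun T hT T' hT' h => Prod.ext ?_ h
  simp only [Finset.coe_filter, Set.mem_ofPred_eq] at hT hT'
  rw [hT.2, hT'.2]

lemma card_erase_fstOver (hP : (A, B) ∈ X) :
    ((fstOver X B).erase A).card = fiber2Card X B - 1 := by
  rw [Finset.card_erase_of_mem (mem_fstOver.mpr hP), card_fstOver]

lemma card_erase_sndOver (hP : (A, B) ∈ X) :
    ((sndOver X A).erase B).card = fiber1Card X A - 1 := by
  rw [Finset.card_erase_of_mem (mem_sndOver.mpr hP), card_sndOver]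

lemma fiber2Card_pos (hP : (A, B) ∈ X) : 0 < fiber2Card X B :=
  card_fstOver (X := X) ▸ Finset.card_pos.mpr ⟨A, mem_fstOver.mpr hP⟩

lemma fiber1Card_pos (hP : (A, B) ∈ X) : 0 < fiber1Card X A :=
  card_sndOver (X := X) ▸ Finset.card_pos.mpr ⟨B, mem_sndOver.mpr hP⟩

lemma IsSeparator.vanishesAt_of_mem_erase_fstOver {F : BiPoly k} {d : ℕ × ℕ}
    (hF : IsSeparator X (A, B) F d) {A' : Proj1 k} (hA' : A' ∈ (fstOver X B).erase A) :
    VanishesAt F (A', B) :=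
  hF.2.2 _ (mem_fstOver.mp (Finset.mem_of_mem_erase hA'))
    (by simpa using Finset.ne_of_mem_erase hA')

lemma IsSeparator.vanishesAt_of_mem_erase_sndOver {F : BiPoly k} {d : ℕ × ℕ}
    (hF : IsSeparator X (A, B) F d) {B' : Proj1 k} (hB' : B' ∈ (sndOver X A).erase B) :
    VanishesAt F (A, B') :=
  hF.2.2 _ (mem_sndOver.mp (Finset.mem_of_mem_erase hB'))
    (by simpa using Finset.ne_of_mem_erase hB')

lemma le_of_mem_sepDegrees (hP : (A, B) ∈ X) {d : ℕ × ℕ} (hd : d ∈ sepDegrees X (A, B)) :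
    (fiber2Card X B - 1, fiber1Card X A - 1) ≤ d := by
  obtain ⟨F, hF⟩ := hd
  rw [← card_erase_fstOver hP, ← card_erase_sndOver hP]
  exact ⟨hF.1.card_le_fst hF.2.1 fun _ => hF.vanishesAt_of_mem_erase_fstOver,
    hF.1.card_le_snd hF.2.1 fun _ => hF.vanishesAt_of_mem_erase_sndOver⟩

lemma exists_mem_sepDegrees_fst (hP : (A, B) ∈ X) :
    ∃ n, (fiber2Card X B - 1, n) ∈ sepDegrees X (A, B) := by
  have h := isSeparator_lineProduct (X := X) (P := (A, B)) (U := (fstOver X B).erase A)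
    (V := (X.image Prod.snd).erase B) (by simp) (by simp) fun ⟨A', B'⟩ hQ hne => by
      by_cases hB' : B' = B
      · subst hB'
        exact Or.inl (Finset.mem_erase.mpr ⟨fun h => hne (h ▸ rfl), mem_fstOver.mpr hQ⟩)
      · exact Or.inr (Finset.mem_erase.mpr ⟨hB', Finset.mem_image_of_mem Prod.snd hQ⟩)
  rw [card_erase_fstOver hP] at h
  exact ⟨_, _, h⟩

lemma exists_mem_sepDegrees_snd (hP : (A, B) ∈ X) :
    ∃ n, (n, fiber1Card X A - 1) ∈ sepDegrees X (A, B) := by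
  have h := isSeparator_lineProduct (X := X) (P := (A, B)) (U := (X.image Prod.fst).erase A)
    (V := (sndOver X A).erase B) (by simp) (by simp) fun ⟨A', B'⟩ hQ hne => by
      by_cases hA' : A' = A
      · subst hA'
        exact Or.inr (Finset.mem_erase.mpr ⟨fun h => hne (h ▸ rfl), mem_sndOver.mpr hQ⟩)
      · exact Or.inl (Finset.mem_erase.mpr ⟨hA', Finset.mem_image_of_mem Prod.fst hQ⟩)
  rw [card_erase_sndOver hP] at h
  exact ⟨_, _, h⟩

lemma exists_degSet_eq_singleton_iff (hP : (A, B) ∈ X) :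
    (∃ d, degSet X (A, B) = {d}) ↔
      (fiber2Card X B - 1, fiber1Card X A - 1) ∈ sepDegrees X (A, B) :=
  exists_setOf_minimal_eq_singleton_iff (fun _ => le_of_mem_sepDegrees hP)
    (exists_mem_sepDegrees_fst hP) (exists_mem_sepDegrees_snd hP)

lemma mem_sepDegrees_of_propertyStar (hX : PropertyStar X) (hP : (A, B) ∈ X) :
    (fiber2Card X B - 1, fiber1Card X A - 1) ∈ sepDegrees X (A, B) := by
  have h := isSeparator_lineProduct (X := X) (P := (A, B)) (U := (fstOver X B).erase A)
    (V := (sndOver X A).erase B) (by simp) (by simp) fun ⟨A', B'⟩ hQ hne => by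
      simp only [Finset.mem_erase, mem_fstOver, mem_sndOver]
      by_cases hA' : A' = A
      · subst hA'
        exact Or.inr ⟨fun h => hne (h ▸ rfl), hQ⟩
      by_cases hB' : B' = B
      · subst hB'
        exact Or.inl ⟨hA', hQ⟩
      rcases hX A B A' B' hP hQ (Ne.symm hA') (Ne.symm hB') with h | h
      · exact Or.inr ⟨hB', h⟩
      · exact Or.inl ⟨hA', h⟩
  rw [card_erase_fstOver hP, card_erase_sndOver hP] at h
  exact ⟨_, h⟩

/-- A separator `F` of the minimal bidegree cannot vanish at `(A, B')`: on the line `{A} × ℙ¹`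
it would then have `fiber1Card X A` zeros. On the line `ℙ¹ × {B'}` it is therefore nonzero at
`A` while vanishing at every point of `X`. -/
lemma fiber2Card_lt_of_notMem (hP : (A, B) ∈ X)
    (hsep : (fiber2Card X B - 1, fiber1Card X A - 1) ∈ sepDegrees X (A, B)) {B' : Proj1 k}
    (hB' : (A, B') ∉ X) : fiber2Card X B' < fiber2Card X B := by
  obtain ⟨F, hF⟩ := hsep
  have hBB' : B' ≠ B := fun h => hB' (h ▸ hP)
  have hnv : ¬ VanishesAt F (A, B') := fun hv => by
    have := hF.1.card_le_snd hF.2.1 (S := insert B' ((sndOver X A).erase B)) <|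
      Finset.forall_mem_insert _ _ _ |>.mpr ⟨hv, fun _ => hF.vanishesAt_of_mem_erase_sndOver⟩
    rw [Finset.card_insert_of_notMem (by simp [mem_sndOver, hB']), card_erase_sndOver hP] at this
    have := fiber1Card_pos hP
    omega
  have := hF.1.card_le_fst hnv (S := fstOver X B') fun A' hA' =>
    hF.2.2 _ (mem_fstOver.mp hA') fun h => hBB' (congrArg Prod.snd h)
  rw [card_fstOver] at this
  have := fiber2Card_pos hP
  omega

end SeparatorDegrees

theorem propertyStar_iff_degree_singleton_general
    (X : Finset (Proj1 k × Proj1 k)) :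
    PropertyStar X ↔ ∀ P ∈ X, ∃ d : ℕ × ℕ, degSet X P = {d} := by
  refine ⟨fun hX ⟨A, B⟩ hP => ?_, fun h A B A' B' hAB hA'B' _ _ => ?_⟩
  · exact (exists_degSet_eq_singleton_iff hP).mpr (mem_sepDegrees_of_propertyStar hX hP)
  · have key {A B B' : Proj1 k} (hP : (A, B) ∈ X) (hB' : (A, B') ∉ X) :
        fiber2Card X B' < fiber2Card X B :=
      fiber2Card_lt_of_notMem hP ((exists_degSet_eq_singleton_iff hP).mp (h _ hP)) hB'
    by_contra! ⟨hAB', hA'B⟩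
    exact lt_asymm (key hAB hAB') (key hA'B' hA'B)

/-- A finite set of points `X ⊆ ℙ¹×ℙ¹` satisfies property (*) if and only if
`deg_X(P)` consists of exactly one element for every `P ∈ X`. -/
theorem propertyStar_iff_degree_singleton [IsAlgClosed k] [CharZero k]
    (X : Finset (Proj1 k × Proj1 k)) :
    PropertyStar X ↔ ∀ P ∈ X, ∃ d : ℕ × ℕ, degSet X P = {d} :=
  propertyStar_iff_degree_singleton_general X
end

section
/- Let X be a finite set of distinct points in ℙ¹×ℙ¹ over k, let P ∈ X, and let (a,b) ∈ deg_X(P). If F and G are two separators of P in X, both of bidegree (a,b), then there exists a nonzero scalar c ∈ k such that G − cF ∈ I_X (i.e., G and cF have the same image in R/I_X). -/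
variable {k : Type*} [Field k]

lemma eval_smul_smul (F : BiPoly k) {a b : ℕ}
    (hF : IsBihomogeneous F (a, b)) (p q : Fin 2 → k) (l m : k) :
    MvPolynomial.eval (Sum.elim (l • p) (m • q)) F
      = l ^ a * m ^ b * MvPolynomial.eval (Sum.elim p q) F := by
  classical
  rw [MvPolynomial.eval_eq', MvPolynomial.eval_eq', Finset.mul_sum]
  apply Finset.sum_congr rfl
  intro mo hmo
  obtain ⟨h1, h2⟩ := hF mo hmo
  rw [Fintype.prod_sum_type, Fintype.prod_sum_type]
  simp only [Sum.elim_inl, Sum.elim_inr, Pi.smul_apply, smul_eq_mul, mul_pow]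
  rw [Finset.prod_mul_distrib, Finset.prod_mul_distrib,
    Finset.prod_pow_eq_pow_sum, Finset.prod_pow_eq_pow_sum, h1, h2]
  ring

lemma eval_rep_ne_zero (F : BiPoly k) {a b : ℕ} (hF : IsBihomogeneous F (a, b))
    (P : Proj1 k × Proj1 k) (hFn : ¬ VanishesAt F P) :
    MvPolynomial.eval (Sum.elim P.1.rep P.2.rep) F ≠ 0 := by
  intro h
  apply hFn
  intro p q hp hq h1 h2
  obtain ⟨u, hu⟩ := (Projectivization.mk_eq_mk_iff k p P.1.rep hp P.1.rep_nonzero).1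
    (by rw [h1, Projectivization.mk_rep])
  obtain ⟨v, hv⟩ := (Projectivization.mk_eq_mk_iff k q P.2.rep hq P.2.rep_nonzero).1
    (by rw [h2, Projectivization.mk_rep])
  rw [← hu, ← hv, Units.smul_def, Units.smul_def, eval_smul_smul F hF _ _ _ _, h, mul_zero]

lemma exists_units_eval (P : Proj1 k × Proj1 k) (p q : Fin 2 → k) (hp : p ≠ 0) (hq : q ≠ 0)
    (h1 : Projectivization.mk k p hp = P.1) (h2 : Projectivization.mk k q hq = P.2) :
    ∃ u v : kˣ, ∀ (F : BiPoly k) (a b : ℕ), IsBihomogeneous F (a, b) →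
      MvPolynomial.eval (Sum.elim p q) F
      = (u:k) ^ a * (v:k) ^ b * MvPolynomial.eval (Sum.elim P.1.rep P.2.rep) F := by
  obtain ⟨u, hu⟩ := (Projectivization.mk_eq_mk_iff k p P.1.rep hp P.1.rep_nonzero).1
    (by rw [h1, Projectivization.mk_rep])
  obtain ⟨v, hv⟩ := (Projectivization.mk_eq_mk_iff k q P.2.rep hq P.2.rep_nonzero).1
    (by rw [h2, Projectivization.mk_rep])
  exact ⟨u, v, fun F a b hF => by
    rw [← hu, ← hv, Units.smul_def, Units.smul_def, eval_smul_smul F hF]⟩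

/-- If `(a,b) ∈ deg_X(P)` and `F`, `G` are separators of `P` in `X` of bidegree `(a,b)`,
then `G = cF` in `R/I_X` for some nonzero scalar `c`. -/
theorem separator_unique_up_to_scalar [IsAlgClosed k] [CharZero k]
    (X : Finset (Proj1 k × Proj1 k)) (P : Proj1 k × Proj1 k) (hP : P ∈ X)
    (d : ℕ × ℕ) (hd : d ∈ degSet X P) (F G : BiPoly k)
    (hF : IsSeparator X P F d) (hG : IsSeparator X P G d) :
    ∃ c : k, c ≠ 0 ∧ G - c • F ∈ vanishingIdeal X := by
  classical
  obtain ⟨hFh, hFn, hFv⟩ := hF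
  obtain ⟨hGh, hGn, hGv⟩ := hG
  obtain ⟨a, b⟩ := d
  set α := MvPolynomial.eval (Sum.elim P.1.rep P.2.rep) F with hαdef
  set β := MvPolynomial.eval (Sum.elim P.1.rep P.2.rep) G with hβdef
  have hα : α ≠ 0 := eval_rep_ne_zero F hFh P hFn
  have hβ : β ≠ 0 := eval_rep_ne_zero G hGh P hGn
  refine ⟨β / α, div_ne_zero hβ hα, ?_⟩
  intro Q hQ p q hp hq h1 h2
  rw [map_sub, MvPolynomial.smul_eval]
  by_cases hQP : Q = P
  · subst hQP
    obtain ⟨u, v, huv⟩ := exists_units_eval Q p q hp hq h1 h2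
    rw [huv F a b hFh, huv G a b hGh]
    field_simp
    ring
  · rw [hFv Q hQ hQP p q hp hq h1 h2, hGv Q hQ hQP p q hp hq h1 h2, mul_zero, sub_zero]
end

section
/- Let X be a finite set of distinct points in ℙ¹×ℙ¹ over k containing points P₁×Q₁ and P₂×Q₂ with P₁ ≠ P₂ and Q₁ ≠ Q₂ such that neither P₁×Q₂ nor P₂×Q₁ belongs to X. Suppose moreover that P₁×Q₁ is the only point of X with first coordinate P₁ and the only point of X with second coordinate Q₁ (i.e., |X_{P₁,1}| = |X_{Q₁,2}| = 1). Then deg_X(P₁×Q₁) contains at least two elements. -/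
variable {k : Type*} [Field k]

open MvPolynomial

theorem MvPolynomial.isHomogeneous_iff_degree_eq {σ R : Type*} [CommSemiring R]
    {φ : MvPolynomial σ R} {n : ℕ} : φ.IsHomogeneous n ↔ ∀ m ∈ φ.support, m.degree = n := by
  simp [IsHomogeneous, IsWeightedHomogeneous, Finsupp.degree_eq_weight_one, Pi.one_def]

noncomputable def linearForm (v : Fin 2 → k) : MvPolynomial (Fin 2) k :=
  C (v 1) * X 0 - C (v 0) * X 1

theorem isHomogeneous_linearForm (v : Fin 2 → k) : (linearForm v).IsHomogeneous 1 :=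
  ((isHomogeneous_X k 0).C_mul _).sub ((isHomogeneous_X k 1).C_mul _)

theorem eval_linearForm (v p : Fin 2 → k) : eval p (linearForm v) = v 1 * p 0 - v 0 * p 1 := by
  simp [linearForm]

theorem eval_linearForm_eq_zero_iff {v p : Fin 2 → k} (hv : v ≠ 0) (hp : p ≠ 0) :
    eval p (linearForm v) = 0 ↔ Projectivization.mk k p hp = Projectivization.mk k v hv := by
  rw [eval_linearForm, Projectivization.mk_eq_mk_iff', sub_eq_zero]
  constructor
  · intro h
    by_cases h0 : v 0 = 0
    · have h1 : v 1 ≠ 0 := fun h1 => hv (funext fun i => by fin_cases i <;> assumption)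
      refine ⟨p 1 / v 1, funext fun i => ?_⟩
      fin_cases i
      · simp only [Fin.zero_eta, Pi.smul_apply, smul_eq_mul]
        field_simp
        linear_combination -h
      · simp [h1]
    · refine ⟨p 0 / v 0, funext fun i => ?_⟩
      fin_cases i
      · simp [h0]
      · simp only [Fin.mk_one, Pi.smul_apply, smul_eq_mul]
        field_simp
        linear_combination h
  · rintro ⟨a, rfl⟩
    simp only [Pi.smul_apply, smul_eq_mul]
    ring

noncomputable def vanishingForm (S : Finset (Proj1 k)) : MvPolynomial (Fin 2) k :=
  ∏ Q ∈ S, linearForm Q.rep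

theorem isHomogeneous_vanishingForm (S : Finset (Proj1 k)) :
    (vanishingForm S).IsHomogeneous S.card := by
  simpa [vanishingForm] using
    IsHomogeneous.prod S _ (fun _ => 1) fun Q _ => isHomogeneous_linearForm Q.rep

theorem eval_vanishingForm_eq_zero_iff (S : Finset (Proj1 k)) {p : Fin 2 → k} (hp : p ≠ 0) :
    eval p (vanishingForm S) = 0 ↔ Projectivization.mk k p hp ∈ S := by
  have hQ (Q : Proj1 k) : eval p (linearForm Q.rep) = 0 ↔ Q = Projectivization.mk k p hp := by
    rw [eval_linearForm_eq_zero_iff Q.rep_nonzero hp, Projectivization.mk_rep, eq_comm]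
  simp only [vanishingForm, map_prod, Finset.prod_eq_zero_iff, hQ, exists_eq_right]

theorem isBihomogeneous_rename_inl {f : MvPolynomial (Fin 2) k} {n : ℕ} (hf : f.IsHomogeneous n) :
    IsBihomogeneous (rename Sum.inl f) (n, 0) := by
  classical
  intro m hm
  rw [support_rename_of_injective Sum.inl_injective, Finset.mem_image] at hm
  obtain ⟨m, hm, rfl⟩ := hm
  have hdeg : (∑ i, m i) = n := by
    rw [← Finsupp.degree_eq_sum]
    exact isHomogeneous_iff_degree_eq.1 hf m hm
  simp [Finsupp.mapDomain_apply Sum.inl_injective, hdeg,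
    Finsupp.mapDomain_of_notMem_range]

theorem isBihomogeneous_rename_inr {f : MvPolynomial (Fin 2) k} {n : ℕ} (hf : f.IsHomogeneous n) :
    IsBihomogeneous (rename Sum.inr f) (0, n) := by
  classical
  intro m hm
  rw [support_rename_of_injective Sum.inr_injective, Finset.mem_image] at hm
  obtain ⟨m, hm, rfl⟩ := hm
  have hdeg : (∑ i, m i) = n := by
    rw [← Finsupp.degree_eq_sum]
    exact isHomogeneous_iff_degree_eq.1 hf m hm
  simp [Finsupp.mapDomain_apply Sum.inr_injective, hdeg,
    Finsupp.mapDomain_of_notMem_range]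

theorem IsBihomogeneous.isHomogeneous {F : BiPoly k} {d : ℕ × ℕ} (hF : IsBihomogeneous F d) :
    F.IsHomogeneous (d.1 + d.2) := by
  refine isHomogeneous_iff_degree_eq.2 fun m hm => ?_
  obtain ⟨hx, hy⟩ := hF m hm
  rw [Finsupp.degree_eq_sum, Fintype.sum_sum_type, hx, hy]

theorem IsBihomogeneous.eq_C_of_zero {F : BiPoly k} (hF : IsBihomogeneous F (0, 0)) :
    F = C (coeff 0 F) :=
  totalDegree_eq_zero_iff_eq_C.1 (Nat.eq_zero_of_le_zero hF.isHomogeneous.totalDegree_le)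

theorem exists_mem_sepDegrees_of_fst_ne {X : Finset (Proj1 k × Proj1 k)} {P : Proj1 k × Proj1 k}
    (hX : ∀ T ∈ X, T ≠ P → T.1 ≠ P.1) : ∃ n, (n, 0) ∈ sepDegrees X P := by
  classical
  set S := (X.image Prod.fst).erase P.1
  refine ⟨S.card, rename Sum.inl (vanishingForm S),
    isBihomogeneous_rename_inl (isHomogeneous_vanishingForm S), fun h => ?_, ?_⟩
  · have hP := h P.1.rep P.2.rep P.1.rep_nonzero P.2.rep_nonzero P.1.mk_rep P.2.mk_rep
    rw [eval_rename, Sum.elim_comp_inl, eval_vanishingForm_eq_zero_iff S P.1.rep_nonzero,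
      Projectivization.mk_rep] at hP
    exact Finset.notMem_erase _ _ hP
  · intro T hT hne p q hp _ hpT _
    rw [eval_rename, Sum.elim_comp_inl, eval_vanishingForm_eq_zero_iff S hp, hpT]
    exact Finset.mem_erase.2 ⟨hX T hT hne, Finset.mem_image_of_mem _ hT⟩

theorem exists_mem_sepDegrees_of_snd_ne {X : Finset (Proj1 k × Proj1 k)} {P : Proj1 k × Proj1 k}
    (hX : ∀ T ∈ X, T ≠ P → T.2 ≠ P.2) : ∃ n, (0, n) ∈ sepDegrees X P := by
  classical
  set S := (X.image Prod.snd).erase P.2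
  refine ⟨S.card, rename Sum.inr (vanishingForm S),
    isBihomogeneous_rename_inr (isHomogeneous_vanishingForm S), fun h => ?_, ?_⟩
  · have hP := h P.1.rep P.2.rep P.1.rep_nonzero P.2.rep_nonzero P.1.mk_rep P.2.mk_rep
    rw [eval_rename, Sum.elim_comp_inr, eval_vanishingForm_eq_zero_iff S P.2.rep_nonzero,
      Projectivization.mk_rep] at hP
    exact Finset.notMem_erase _ _ hP
  · intro T hT hne p q _ hq _ hqT
    rw [eval_rename, Sum.elim_comp_inr, eval_vanishingForm_eq_zero_iff S hq, hqT]
    exact Finset.mem_erase.2 ⟨hX T hT hne, Finset.mem_image_of_mem _ hT⟩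

theorem zero_notMem_sepDegrees {X : Finset (Proj1 k × Proj1 k)} {P T : Proj1 k × Proj1 k}
    (hT : T ∈ X) (hTP : T ≠ P) : (0, 0) ∉ sepDegrees X P := by
  rintro ⟨F, hF, hFP, hFX⟩
  refine hFP fun p q _ _ _ _ => ?_
  have hFT := hFX T hT hTP T.1.rep T.2.rep T.1.rep_nonzero T.2.rep_nonzero T.1.mk_rep T.2.mk_rep
  rw [hF.eq_C_of_zero, eval_C] at hFT ⊢
  exact hFT

theorem degSet_nontrivial_of_mem_axes {X : Finset (Proj1 k × Proj1 k)} {P : Proj1 k × Proj1 k}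
    (hfst : ∃ n, (n, 0) ∈ sepDegrees X P) (hsnd : ∃ n, (0, n) ∈ sepDegrees X P)
    (hzero : (0, 0) ∉ sepDegrees X P) : (degSet X P).Nontrivial := by
  have hmin {d : ℕ × ℕ} (hd : Minimal (· ∈ sepDegrees X P) d) : d ∈ degSet X P :=
    ⟨hd.prop, fun _ he hle => hd.eq_of_le he hle⟩
  obtain ⟨m, hm⟩ := hfst
  obtain ⟨n, hn⟩ := hsnd
  obtain ⟨a, ha, ha_min⟩ := exists_minimal_le_of_wellFoundedLT _ _ hm
  obtain ⟨b, hb, hb_min⟩ := exists_minimal_le_of_wellFoundedLT _ _ hn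
  refine ⟨a, hmin ha_min, b, hmin hb_min, fun hab => hzero ?_⟩
  subst hab
  have ha0 : a = (0, 0) := Prod.ext (Nat.le_zero.1 hb.1) (Nat.le_zero.1 ha.2)
  exact ha0 ▸ ha_min.prop

theorem eq_of_fiber1Card_eq_one {X : Finset (Proj1 k × Proj1 k)} {P : Proj1 k}
    (hX : fiber1Card X P = 1) {T U : Proj1 k × Proj1 k} (hT : T ∈ X) (hU : U ∈ X)
    (hTP : T.1 = P) (hUP : U.1 = P) : T = U := by
  classical
  exact Finset.card_le_one.1 hX.le T (Finset.mem_filter.2 ⟨hT, hTP⟩) U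
    (Finset.mem_filter.2 ⟨hU, hUP⟩)

theorem eq_of_fiber2Card_eq_one {X : Finset (Proj1 k × Proj1 k)} {Q : Proj1 k}
    (hX : fiber2Card X Q = 1) {T U : Proj1 k × Proj1 k} (hT : T ∈ X) (hU : U ∈ X)
    (hTQ : T.2 = Q) (hUQ : U.2 = Q) : T = U := by
  classical
  exact Finset.card_le_one.1 hX.le T (Finset.mem_filter.2 ⟨hT, hTQ⟩) U
    (Finset.mem_filter.2 ⟨hU, hUQ⟩)

theorem degree_nontrivial_of_not_star_case_one_general
    (X : Finset (Proj1 k × Proj1 k)) (P₁ Q₁ P₂ Q₂ : Proj1 k)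
    (h₁ : (P₁, Q₁) ∈ X) (h₂ : (P₂, Q₂) ∈ X) (hP : P₁ ≠ P₂)
    (hb : fiber1Card X P₁ = 1) (ha : fiber2Card X Q₁ = 1) :
    (degSet X (P₁, Q₁)).Nontrivial :=
  degSet_nontrivial_of_mem_axes
    (exists_mem_sepDegrees_of_fst_ne fun _ hT hne h =>
      hne (eq_of_fiber1Card_eq_one hb hT h₁ h rfl))
    (exists_mem_sepDegrees_of_snd_ne fun _ hT hne h =>
      hne (eq_of_fiber2Card_eq_one ha hT h₁ h rfl))
    (zero_notMem_sepDegrees h₂ fun h => hP (congrArg Prod.fst h).symm)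

/-- Case 1: if `X` fails property (*) at `P₁×Q₁`, `P₂×Q₂` and moreover
`|X_{P₁,1}| = |X_{Q₁,2}| = 1`, then `deg_X(P₁×Q₁)` has at least two elements. -/
theorem degree_nontrivial_of_not_star_case_one [IsAlgClosed k] [CharZero k]
    (X : Finset (Proj1 k × Proj1 k)) (P₁ Q₁ P₂ Q₂ : Proj1 k)
    (h₁ : (P₁, Q₁) ∈ X) (h₂ : (P₂, Q₂) ∈ X) (hP : P₁ ≠ P₂) (hQ : Q₁ ≠ Q₂)
    (h₁₂ : (P₁, Q₂) ∉ X) (h₂₁ : (P₂, Q₁) ∉ X)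
    (hb : fiber1Card X P₁ = 1) (ha : fiber2Card X Q₁ = 1) :
    (degSet X (P₁, Q₁)).Nontrivial :=
  degree_nontrivial_of_not_star_case_one_general X P₁ Q₁ P₂ Q₂ h₁ h₂ hP hb ha
end
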